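/- Eventual progress of merged state: if H is injective, then for any nonempty list L of values in Σ × ℕ and any V ∈ L, one has V ≤ₑ fold(merge, L); in particular, once a worker's write V₁ has been delivered to another worker, every value V₂ that worker subsequently reads for that key satisfies V₁ ≤ₑ V₂. -/
import Mathlib


/-- The relation `≤ₑ` on values `(v, t) ∈ Σ × ℕ`:
`(v₁,t₁) ≤ₑ (v₂,t₂)` iff `t₁ < t₂`, or (`t₁ = t₂` and `H v₁ ≤ H v₂`). -/
def leE {σ : Type*} (H : σ → ℕ) (V₁ V₂ : σ × ℕ) : Prop :=
  V₁.2 < V₂.2 ∨ (V₁.2 = V₂.2 ∧ H V₁.1 ≤ H V₂.1)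

open Classical in
/-- `merge V₁ V₂ = V₂` if `V₁ ≤ₑ V₂`, and `V₁` otherwise. -/
noncomputable def merge {σ : Type*} (H : σ → ℕ) (V₁ V₂ : σ × ℕ) : σ × ℕ :=
  if leE H V₁ V₂ then V₂ else V₁

lemma leE_refl {σ : Type*} (H : σ → ℕ) (V : σ × ℕ) : leE H V V :=
  Or.inr ⟨rfl, le_refl _⟩

lemma leE_trans {σ : Type*} (H : σ → ℕ) {a b c : σ × ℕ}
    (h₁ : leE H a b) (h₂ : leE H b c) : leE H a c := by
  rcases h₁ with h₁ | ⟨e₁, h₁⟩ <;> rcases h₂ with h₂ | ⟨e₂, h₂⟩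
  · exact Or.inl (h₁.trans h₂)
  · exact Or.inl (e₂ ▸ h₁)
  · exact Or.inl (e₁ ▸ h₂)
  · exact Or.inr ⟨e₁.trans e₂, h₁.trans h₂⟩

lemma leE_total {σ : Type*} (H : σ → ℕ) (a b : σ × ℕ) :
    leE H a b ∨ leE H b a := by
  rcases lt_trichotomy a.2 b.2 with h | h | h
  · exact Or.inl (Or.inl h)
  · rcases le_total (H a.1) (H b.1) with h' | h'
    · exact Or.inl (Or.inr ⟨h, h'⟩)
    · exact Or.inr (Or.inr ⟨h.symm, h'⟩)
  · exact Or.inr (Or.inl h)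

lemma leE_merge_left {σ : Type*} (H : σ → ℕ) (a b : σ × ℕ) :
    leE H a (merge H a b) := by
  unfold merge; split
  · assumption
  · exact leE_refl H a

lemma leE_merge_right {σ : Type*} (H : σ → ℕ) (a b : σ × ℕ) :
    leE H b (merge H a b) := by
  unfold merge; split
  · exact leE_refl H b
  · rcases leE_total H a b with h | h
    · exact absurd h (by assumption)
    · exact h

lemma leE_foldl {σ : Type*} (H : σ → ℕ) :
    ∀ (L : List (σ × ℕ)) (a V : σ × ℕ), (V = a ∨ V ∈ L) →
      leE H V (L.foldl (merge H) a) := by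
  intro L
  induction L with
  | nil => rintro a V (rfl | h); · exact leE_refl H V
           · simp at h
  | cons b t ih =>
    rintro a V (rfl | h)
    · exact leE_trans H (leE_merge_left H V b) (ih _ _ (Or.inl rfl))
    · rcases List.mem_cons.mp h with rfl | h
      · exact leE_trans H (leE_merge_right H a V) (ih _ _ (Or.inl rfl))
      · exact ih _ _ (Or.inr h)

/-- Eventual progress: if `H` is injective, every element `V` of a nonempty
list `L` satisfies `V ≤ₑ fold merge L`; once a write has been delivered,
every subsequently read value dominates it in `≤ₑ`. -/
theorem merge_fold_le {σ : Type*} (H : σ → ℕ) (hH : Function.Injective H) :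
    ∀ (L : List (σ × ℕ)) (hL : L ≠ []) (V : σ × ℕ), V ∈ L →
      leE H V (L.tail.foldl (merge H) (L.head hL)) := by
  intro L hL V hV
  cases L with
  | nil => exact absurd rfl hL
  | cons a t =>
    rcases List.mem_cons.mp hV with rfl | h
    · exact leE_foldl H t V V (Or.inl rfl)
    · exact leE_foldl H t a V (Or.inr h)
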